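/- arXiv:1912.01270 — 3 statements merged into one kernel-verified Lean document; each statement's English description precedes it below -/
import Mathlib

section
/- For the white-noise BB84 family of correlations defined by p(x1,b|x0,y) = (1 + (-1)^{x1⊕b⊕(x0·y)} δ_{x0,y} V)/4 with 0 < V ≤ 1, the nonlinear witness Q, defined as the absolute value of the determinant of the 2×2 matrix with entries Q_{y,x0} = p(0|0;x0,y) − p(0|1;x0,y) where p(b|x1;x0,y) = p(x1,b|x0,y)/p(x1|x0), equals V². -/
/-- The white-noise BB84 box: p(x1,b|x0,y). -/
noncomputable def bb84Box (V : ℝ) (x1 b x0 y : Fin 2) : ℝ :=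
  (1 + (-1 : ℝ) ^ ((x1 : ℕ) + (b : ℕ) + (x0 : ℕ) * (y : ℕ)) *
      (if x0 = y then 1 else 0) * V) / 4

/-- Conditional probability p(b|x1;x0,y) = p(x1,b|x0,y)/p(x1|x0), with
    p(x1|x0) = Σ_b p(x1,b|x0,y). -/
noncomputable def bb84Cond (V : ℝ) (b x1 x0 y : Fin 2) : ℝ :=
  bb84Box V x1 b x0 y / ∑ b' : Fin 2, bb84Box V x1 b' x0 y

/-- The witness Q = |det M| with M_{y,x0} = p(0|0;x0,y) − p(0|1;x0,y). -/
noncomputable def Qwitness (pc : Fin 2 → Fin 2 → Fin 2 → Fin 2 → ℝ) : ℝ :=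
  |(pc 0 0 0 0 - pc 0 1 0 0) * (pc 0 0 1 1 - pc 0 1 1 1) -
    (pc 0 0 1 0 - pc 0 1 1 0) * (pc 0 0 0 1 - pc 0 1 0 1)|

/-! The marginal of `x1` is uniform, so conditioning on it just doubles the box; the matrix of
the witness is then `diag (V, -V)`, the sign coming from `(-1) ^ (x0 * y)` at `x0 = y = 1`. -/

theorem Qwitness_eq_abs_det (pc : Fin 2 → Fin 2 → Fin 2 → Fin 2 → ℝ) :
    Qwitness pc = |(Matrix.of fun y x0 => pc 0 0 x0 y - pc 0 1 x0 y).det| := by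
  rw [Qwitness, Matrix.det_fin_two]
  rfl

theorem sum_bb84Box (V : ℝ) (x1 x0 y : Fin 2) : ∑ b : Fin 2, bb84Box V x1 b x0 y = 1 / 2 := by
  simp only [Fin.sum_univ_two, bb84Box, Fin.val_zero, Fin.val_one, add_zero]
  ring

theorem bb84Cond_eq_two_mul (V : ℝ) (b x1 x0 y : Fin 2) :
    bb84Cond V b x1 x0 y = 2 * bb84Box V x1 b x0 y := by
  rw [bb84Cond, sum_bb84Box]
  ring

theorem bb84Cond_zero_sub_bb84Cond_one (V : ℝ) (x0 y : Fin 2) :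
    bb84Cond V 0 0 x0 y - bb84Cond V 0 1 x0 y =
      (-1 : ℝ) ^ ((x0 : ℕ) * (y : ℕ)) * (if x0 = y then 1 else 0) * V := by
  simp only [bb84Cond_eq_two_mul, bb84Box, Fin.val_zero, Fin.val_one, zero_add]
  ring

theorem bb84_witness_eq_V_sq_general (V : ℝ) :
    Qwitness (bb84Cond V) = V ^ 2 := by
  have hM : (Matrix.of fun y x0 => bb84Cond V 0 0 x0 y - bb84Cond V 0 1 x0 y) =
      !![V, 0; 0, -V] := by
    ext y x0
    fin_cases y <;> fin_cases x0 <;> simp [bb84Cond_zero_sub_bb84Cond_one]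
  rw [Qwitness_eq_abs_det, hM, Matrix.det_fin_two_of, mul_zero, sub_zero, mul_neg, abs_neg,
    abs_mul_self, sq]

theorem bb84_witness_eq_V_sq (V : ℝ) (hV0 : 0 < V) (hV1 : V ≤ 1) :
    Qwitness (bb84Cond V) = V ^ 2 :=
  bb84_witness_eq_V_sq_general V
end

section
/- Let ρ_CQ = Σ_{i∈{0,1}} p_i |i⟩⟨i| ⊗ χ_i be a two-qubit classical-quantum state (orthonormal {|i⟩}, arbitrary qubit states χ_i, p_0 + p_1 = 1, p_i ≥ 0). For any POVMs {M_{x1|x0}} on Alice's qubit and {M_{b|y}} on Bob's qubit (x0, x1, y, b ∈ {0,1}), the witness Q computed from the conditional probabilities p(b|x1;x0,y) = Tr((M_{x1|x0}⊗M_{b|y})ρ_CQ)/Tr((M_{x1|x0}⊗I)ρ_CQ) equals 0. -/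
open Matrix Kronecker ComplexOrder

/-- Rank-one projector |v⟩⟨v| on ℂ². -/
def proj (v : Fin 2 → ℂ) : Matrix (Fin 2) (Fin 2) ℂ :=
  fun k l => v k * star (v l)

/-!
Measuring Bob's half of a classical-quantum state after Alice's outcome `x1` amounts to measuring
the mixture of the states `χ i` weighted by the posterior `π(i | x0, x1)` of the classical
register. With two values of `i`, this posterior is determined by `π(0 | x0, x1)`, so
`p(0|0;x0,y) − p(0|1;x0,y) = (π(0|x0,0) − π(0|x0,1)) · (tr(M_{0|y} χ_0) − tr(M_{0|y} χ_1))`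
factors as a function of `x0` times a function of `y`, and the 2 × 2 determinant `Q` vanishes.
-/

lemma proj_isHermitian (v : Fin 2 → ℂ) : (proj v).IsHermitian := by
  ext k l
  simp [proj, conjTranspose_apply, mul_comm]

lemma Matrix.IsHermitian.ofReal_re_trace_mul {n : Type*} [Fintype n] {A B : Matrix n n ℂ}
    (hA : A.IsHermitian) (hB : B.IsHermitian) : ((A * B).trace.re : ℂ) = (A * B).trace := by
  refine Complex.conj_eq_iff_re.mp ?_
  have h := trace_conjTranspose (A * B)
  rw [conjTranspose_mul, hA.eq, hB.eq, trace_mul_comm] at h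
  exact h.symm

lemma Matrix.trace_kronecker_mul_sum_smul_kronecker {ι m n R : Type*}
    [Fintype ι] [Fintype m] [Fintype n] [CommSemiring R]
    (A : Matrix m m R) (B : Matrix n n R) (c : ι → R)
    (X : ι → Matrix m m R) (Y : ι → Matrix n n R) :
    ((A ⊗ₖ B) * ∑ i, c i • (X i ⊗ₖ Y i)).trace =
      ∑ i, c i * (A * X i).trace * (B * Y i).trace := by
  rw [Finset.mul_sum, trace_sum]
  refine Finset.sum_congr rfl fun i _ => ?_
  rw [Matrix.mul_smul, trace_smul, ← mul_kronecker_mul, trace_kronecker, smul_eq_mul, mul_assoc]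

lemma Matrix.IsHermitian.re_trace_kronecker_mul_sum_smul_kronecker {ι m n : Type*}
    [Fintype ι] [Fintype m] [Fintype n]
    {A : Matrix m m ℂ} (B : Matrix n n ℂ) (p : ι → ℝ)
    {X : ι → Matrix m m ℂ} (Y : ι → Matrix n n ℂ)
    (hA : A.IsHermitian) (hX : ∀ i, (X i).IsHermitian) :
    ((A ⊗ₖ B) * ∑ i, (p i : ℂ) • (X i ⊗ₖ Y i)).trace.re =
      ∑ i, p i * (A * X i).trace.re * (B * Y i).trace.re := by
  rw [trace_kronecker_mul_sum_smul_kronecker, Complex.re_sum]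
  refine Finset.sum_congr rfl fun i _ => ?_
  rw [← (hA.ofReal_re_trace_mul (hX i)), ← Complex.ofReal_mul, Complex.re_ofReal_mul,
    Complex.ofReal_re]

lemma weightedMean_sub_weightedMean_fin_two {K : Type*} [Field K] {w w' : Fin 2 → K}
    (β : Fin 2 → K) (hw : ∑ i, w i ≠ 0) (hw' : ∑ i, w' i ≠ 0) :
    (∑ i, w i * β i) / ∑ i, w i - (∑ i, w' i * β i) / ∑ i, w' i =
      (w 0 / ∑ i, w i - w' 0 / ∑ i, w' i) * (β 0 - β 1) := by
  simp only [Fin.sum_univ_two] at hw hw' ⊢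
  field_simp
  ring

lemma Qwitness_eq_zero_of_sub_eq_mul {pc : Fin 2 → Fin 2 → Fin 2 → Fin 2 → ℝ}
    (a c : Fin 2 → ℝ) (h : ∀ x0 y, pc 0 0 x0 y - pc 0 1 x0 y = a x0 * c y) :
    Qwitness pc = 0 := by
  rw [Qwitness, h, h, h, h, abs_eq_zero]
  ring

theorem cq_state_witness_vanishes_general
    (p : Fin 2 → ℝ)
    (v : Fin 2 → Fin 2 → ℂ)
    (χ : Fin 2 → Matrix (Fin 2) (Fin 2) ℂ)
    (hχtr : ∀ i, Matrix.trace (χ i) = 1)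
    (ρCQ : Matrix (Fin 2 × Fin 2) (Fin 2 × Fin 2) ℂ)
    (hρ : ρCQ = ∑ i, (p i : ℂ) • (proj (v i) ⊗ₖ χ i))
    (MA : Fin 2 → Fin 2 → Matrix (Fin 2) (Fin 2) ℂ)  -- MA x0 x1 = M_{x1|x0}
    (hMApsd : ∀ x0 x1, (MA x0 x1).PosSemidef)
    (MB : Fin 2 → Fin 2 → Matrix (Fin 2) (Fin 2) ℂ)  -- MB y b = M_{b|y}
    (hden : ∀ x0 x1, (Matrix.trace ((MA x0 x1 ⊗ₖ (1 : Matrix (Fin 2) (Fin 2) ℂ)) * ρCQ)).re ≠ 0)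
    (pc : Fin 2 → Fin 2 → Fin 2 → Fin 2 → ℝ)
    (hpc : ∀ b x1 x0 y, pc b x1 x0 y =
      (Matrix.trace ((MA x0 x1 ⊗ₖ MB y b) * ρCQ)).re /
        (Matrix.trace ((MA x0 x1 ⊗ₖ (1 : Matrix (Fin 2) (Fin 2) ℂ)) * ρCQ)).re) :
    Qwitness pc = 0 := by
  set w : Fin 2 → Fin 2 → Fin 2 → ℝ := fun x0 x1 i => p i * (MA x0 x1 * proj (v i)).trace.re
  set β : Fin 2 → Fin 2 → ℝ := fun y i => (MB y 0 * χ i).trace.re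
  have hjoint : ∀ x0 x1 B, ((MA x0 x1 ⊗ₖ B) * ρCQ).trace.re =
      ∑ i, p i * (MA x0 x1 * proj (v i)).trace.re * (B * χ i).trace.re := fun x0 x1 B => by
    rw [hρ]
    exact (hMApsd x0 x1).1.re_trace_kronecker_mul_sum_smul_kronecker B p χ
      fun i => proj_isHermitian (v i)
  have hmarg : ∀ x0 x1, ((MA x0 x1 ⊗ₖ (1 : Matrix (Fin 2) (Fin 2) ℂ)) * ρCQ).trace.re =
      ∑ i, w x0 x1 i := fun x0 x1 => by
    simp only [hjoint, one_mul, hχtr, Complex.one_re, mul_one, w]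
  refine Qwitness_eq_zero_of_sub_eq_mul (fun x0 => w x0 0 0 / ∑ i, w x0 0 i - w x0 1 0 / ∑ i, w x0 1 i)
    (fun y => β y 0 - β y 1) fun x0 y => ?_
  rw [hpc, hpc, hmarg, hmarg, hjoint, hjoint]
  exact weightedMean_sub_weightedMean_fin_two (β y) (hmarg x0 0 ▸ hden x0 0)
    (hmarg x0 1 ▸ hden x0 1)

theorem cq_state_witness_vanishes
    (p : Fin 2 → ℝ) (hp : ∀ i, 0 ≤ p i) (hp1 : p 0 + p 1 = 1)
    (v : Fin 2 → Fin 2 → ℂ)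
    (hortho : ∀ i j, ∑ k, star (v i k) * v j k = if i = j then 1 else 0)
    (χ : Fin 2 → Matrix (Fin 2) (Fin 2) ℂ)
    (hχpsd : ∀ i, (χ i).PosSemidef) (hχtr : ∀ i, Matrix.trace (χ i) = 1)
    (ρCQ : Matrix (Fin 2 × Fin 2) (Fin 2 × Fin 2) ℂ)
    (hρ : ρCQ = ∑ i, (p i : ℂ) • (proj (v i) ⊗ₖ χ i))
    (MA : Fin 2 → Fin 2 → Matrix (Fin 2) (Fin 2) ℂ)  -- MA x0 x1 = M_{x1|x0}
    (hMApsd : ∀ x0 x1, (MA x0 x1).PosSemidef)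
    (hMAsum : ∀ x0, MA x0 0 + MA x0 1 = 1)
    (MB : Fin 2 → Fin 2 → Matrix (Fin 2) (Fin 2) ℂ)  -- MB y b = M_{b|y}
    (hMBpsd : ∀ y b, (MB y b).PosSemidef)
    (hMBsum : ∀ y, MB y 0 + MB y 1 = 1)
    (hden : ∀ x0 x1, (Matrix.trace ((MA x0 x1 ⊗ₖ (1 : Matrix (Fin 2) (Fin 2) ℂ)) * ρCQ)).re ≠ 0)
    (pc : Fin 2 → Fin 2 → Fin 2 → Fin 2 → ℝ)
    (hpc : ∀ b x1 x0 y, pc b x1 x0 y =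
      (Matrix.trace ((MA x0 x1 ⊗ₖ MB y b) * ρCQ)).re /
        (Matrix.trace ((MA x0 x1 ⊗ₖ (1 : Matrix (Fin 2) (Fin 2) ℂ)) * ρCQ)).re) :
    Qwitness pc = 0 :=
  cq_state_witness_vanishes_general p v χ hχtr ρCQ hρ MA hMApsd MB hden pc hpc
end

section
/- In the 2-to-1 random access code with a classical bit: for any encoding function E: {0,1}² → {0,1} and decoding functions D_y: {0,1} → {0,1} (y ∈ {0,1}), possibly randomized by shared randomness, the average success probability P_B = (1/8) Σ_{x0,x1,y} Pr[D_y(E(x0,x1)) = x_y] is at most 3/4. -/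
/-!
The success probability is linear in the shared-randomness distribution, so it is a convex
combination of the success probabilities of deterministic strategies, and it suffices to bound
those by 3/4. A deterministic decoder has only two messages, hence at most two guess points
in {0,1}²; at least two of the four inputs are therefore answered with a wrong bit, so at most
6 of the 8 (input, question) pairs succeed. The last fact is a finite check over the 2⁴ · 2⁴
strategies.
-/

def racSuccessCount (E : Fin 2 → Fin 2 → Fin 2) (D : Fin 2 → Fin 2 → Fin 2) : ℕ :=
  ∑ x0 : Fin 2, ∑ x1 : Fin 2, ∑ y : Fin 2,
    if D y (E x0 x1) = (if y = 0 then x0 else x1) then 1 else 0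

theorem racSuccessCount_le_six (E : Fin 2 → Fin 2 → Fin 2) (D : Fin 2 → Fin 2 → Fin 2) :
    racSuccessCount E D ≤ 6 := by
  revert E D
  decide

theorem rac_deterministic_bound (E : Fin 2 → Fin 2 → Fin 2) (D : Fin 2 → Fin 2 → Fin 2) :
    (1/8 : ℝ) * ∑ x0 : Fin 2, ∑ x1 : Fin 2, ∑ y : Fin 2,
      (if D y (E x0 x1) = (if y = 0 then x0 else x1) then 1 else 0) ≤ 3/4 := by
  have hcount : (racSuccessCount E D : ℝ) ≤ 6 := by exact_mod_cast racSuccessCount_le_six E D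
  simp only [racSuccessCount, Nat.cast_sum, Nat.cast_ite, Nat.cast_one, Nat.cast_zero] at hcount
  linarith

theorem rac_classical_bound (Λ : Type) [Fintype Λ] (w : Λ → ℝ)
    (hw : ∀ l, 0 ≤ w l) (hw1 : ∑ l, w l = 1)
    (E : Λ → Fin 2 → Fin 2 → Fin 2)       -- encoding (possibly depending on shared randomness)
    (D : Λ → Fin 2 → Fin 2 → Fin 2) :     -- decoding D l y : message ↦ guess
    ∑ l, w l * ((1/8 : ℝ) * ∑ x0 : Fin 2, ∑ x1 : Fin 2, ∑ y : Fin 2,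
      if D l y (E l x0 x1) = (if y = 0 then x0 else x1) then 1 else 0) ≤ 3/4 :=
  (convex_Iic (3/4 : ℝ)).sum_mem (fun l _ => hw l) hw1
    fun l _ => rac_deterministic_bound (E l) (D l)
end
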